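/- arXiv:1609.08733 — 8 statements merged into one kernel-verified Lean document; each statement's English description precedes it below -/
import Mathlib

section
/- Let L be a symmetric real n×n matrix and b ∈ ℝⁿ, and let W₁(L) = [[L+I, −I], [−I, I]] be the 2n×2n whiskered matrix. Then the pair (W₁(L), [bᵀ, 0ᵀ]ᵀ) (the input vector is b on the original n nodes and zero on the n new leaf nodes) is uncontrollable if and only if the pair (L, b) is uncontrollable. -/
/-!
An eigenvector of `W₁(L)` for the eigenvalue `1 - t` has the form `(u, v)` with `u = t v` and
`L u = v - t u`. Here `t ≠ 0`, since otherwise `u = 0` and then `v = L u = 0`; so `u` is an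
eigenvector of `L` for the eigenvalue `t⁻¹ - t`, orthogonal to `b` exactly when `(u, v)` is
orthogonal to `(b, 0)`. Conversely, every real `μ` equals `t⁻¹ - t` for a root `t ≠ 0` of
`t² + μ t - 1`, and an eigenvector `u` of `L` for `μ` lifts to the eigenvector `(u, t⁻¹ u)` of
`W₁(L)` for `1 - t`.
-/

open Matrix

/-- PBH-style uncontrollability for a symmetric state matrix: there is a nonzero
eigenvector of `A` orthogonal to `b`. -/
def Uncontrollable {m : Type*} [Fintype m] (A : Matrix m m ℝ) (b : m → ℝ) : Prop :=
  ∃ (lam : ℝ) (w : m → ℝ), w ≠ 0 ∧ A.mulVec w = lam • w ∧ w ⬝ᵥ b = 0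

/-- The whiskered matrix `W₁(L) = [[L+I, −I], [−I, I]]`. -/
noncomputable def whisker1 {n : ℕ} (L : Matrix (Fin n) (Fin n) ℝ) :
    Matrix (Fin n ⊕ Fin n) (Fin n ⊕ Fin n) ℝ :=
  Matrix.fromBlocks (L + 1) (-1) (-1) 1

theorem Real.exists_ne_zero_inv_sub_eq (μ : ℝ) : ∃ t ≠ 0, t⁻¹ - t = μ := by
  obtain ⟨t, ht⟩ : ∃ t : ℝ, 1 * (t * t) + μ * t + -1 = 0 :=
    exists_quadratic_eq_zero one_ne_zero ⟨√(μ ^ 2 + 4), by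
      rw [discrim, ← sq, Real.sq_sqrt (by positivity)]; ring⟩
  have ht0 : t ≠ 0 := by rintro rfl; norm_num at ht
  exact ⟨t, ht0, by field_simp; linear_combination -ht⟩

theorem Sum.smul_elim {α β M γ : Type*} [SMul M γ] (c : M) (u : α → γ) (v : β → γ) :
    c • Sum.elim u v = Sum.elim (c • u) (c • v) := by
  ext (i | i) <;> rfl

section Whisker

variable {n : ℕ} (L : Matrix (Fin n) (Fin n) ℝ)

theorem whisker1_mulVec_sumElim (u v : Fin n → ℝ) :
    whisker1 L *ᵥ Sum.elim u v = Sum.elim (L *ᵥ u + u - v) (v - u) := by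
  simp only [whisker1, fromBlocks_mulVec, Sum.elim_comp_inl, Sum.elim_comp_inr, add_mulVec,
    one_mulVec, neg_mulVec, ← sub_eq_add_neg, neg_add_eq_sub]

theorem whisker1_mulVec_sumElim_eq_smul_iff {u v : Fin n → ℝ} {t : ℝ} :
    whisker1 L *ᵥ Sum.elim u v = (1 - t) • Sum.elim u v ↔ L *ᵥ u = v - t • u ∧ u = t • v := by
  rw [whisker1_mulVec_sumElim, Sum.smul_elim, Sum.elim_eq_iff]
  refine and_congr ⟨fun h => ?_, fun h => ?_⟩ ⟨fun h => ?_, fun h => ?_⟩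
  · linear_combination (norm := module) h
  · linear_combination (norm := module) h
  · linear_combination (norm := module) -h
  · linear_combination (norm := module) -h

theorem Uncontrollable.of_whisker1 {b : Fin n → ℝ}
    (h : Uncontrollable (whisker1 L) (Sum.elim b 0)) : Uncontrollable L b := by
  obtain ⟨lam, w, hw0, hw, hwb⟩ := h
  obtain ⟨u, v, rfl⟩ : ∃ u v, w = Sum.elim u v := ⟨_, _, (Sum.elim_comp_inl_inr w).symm⟩
  obtain ⟨t, rfl⟩ : ∃ t, lam = 1 - t := ⟨1 - lam, (sub_sub_cancel 1 lam).symm⟩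
  obtain ⟨hLu, huv⟩ := (whisker1_mulVec_sumElim_eq_smul_iff L).mp hw
  have ht : t ≠ 0 := by
    rintro ht
    rw [ht, zero_smul] at huv
    rw [huv, mulVec_zero, ht, zero_smul, sub_zero] at hLu
    exact hw0 (by rw [huv, ← hLu, Sum.elim_zero_zero])
  have hv : v = t⁻¹ • u := by rw [huv, inv_smul_smul₀ ht]
  refine ⟨t⁻¹ - t, u, ?_, by rw [hLu, hv, sub_smul], ?_⟩
  · rintro rfl
    exact hw0 (by rw [hv, smul_zero, Sum.elim_zero_zero])
  · simpa [sumElim_dotProduct_sumElim] using hwb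

theorem Uncontrollable.whisker1 {b : Fin n → ℝ} (h : Uncontrollable L b) :
    Uncontrollable (whisker1 L) (Sum.elim b 0) := by
  obtain ⟨μ, u, hu0, hLu, hub⟩ := h
  obtain ⟨t, ht, rfl⟩ := Real.exists_ne_zero_inv_sub_eq μ
  refine ⟨1 - t, Sum.elim u (t⁻¹ • u), ?_, ?_, ?_⟩
  · rw [Ne, ← Sum.elim_zero_zero, Sum.elim_eq_iff]
    exact fun h => hu0 h.1
  · rw [whisker1_mulVec_sumElim_eq_smul_iff, hLu, sub_smul, smul_inv_smul₀ ht]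
    exact ⟨rfl, rfl⟩
  · simp [sumElim_dotProduct_sumElim, hub]

end Whisker

theorem whisker1_controllability_b0_general {n : ℕ} (L : Matrix (Fin n) (Fin n) ℝ)
    (b : Fin n → ℝ) :
    Uncontrollable (whisker1 L) (Sum.elim b 0) ↔ Uncontrollable L b :=
  ⟨Uncontrollable.of_whisker1 L, Uncontrollable.whisker1 L⟩

theorem whisker1_controllability_b0 {n : ℕ} (L : Matrix (Fin n) (Fin n) ℝ)
    (hL : L.IsSymm) (b : Fin n → ℝ) :
    Uncontrollable (whisker1 L) (Sum.elim b 0) ↔ Uncontrollable L b :=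
  whisker1_controllability_b0_general L b
end

section
/- Let L be a real n×n matrix, w ∈ ℝⁿ with L w = λ w for some λ ∈ ℝ, and let Λ ∈ ℝ satisfy Λ ≠ 1, Λ² − 3Λ + 1 ≠ 0, and the compatibility equation λ + 2 = Λ + 1/(1−Λ) + (1−Λ)/(Λ² − 3Λ + 1). Define α = (1−Λ)⁻¹ w, β = ((1−Λ)/(Λ² − 3Λ + 1)) w, and γ = (1−Λ)⁻¹ β. Then W₂(L)·[wᵀ, αᵀ, βᵀ, γᵀ]ᵀ = Λ·[wᵀ, αᵀ, βᵀ, γᵀ]ᵀ, so when w ≠ 0 this stacked vector is an eigenvector of the path-whiskered matrix with eigenvalue Λ, and each of α, β, γ is a scalar multiple of w. -/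
open Matrix

/-- The path-whiskered matrix
`W₂(L) = [[L+2I, −I, −I, 0], [−I, I, 0, 0], [−I, 0, 2I, −I], [0, 0, −I, I]]`. -/
noncomputable def whisker2 {n : ℕ} (L : Matrix (Fin n) (Fin n) ℝ) :
    Matrix ((Fin n ⊕ Fin n) ⊕ (Fin n ⊕ Fin n)) ((Fin n ⊕ Fin n) ⊕ (Fin n ⊕ Fin n)) ℝ :=
  Matrix.fromBlocks
    (Matrix.fromBlocks (L + 2) (-1) (-1) 1)
    (Matrix.fromBlocks (-1) 0 0 0)
    (Matrix.fromBlocks (-1) 0 0 0)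
    (Matrix.fromBlocks 2 (-1) (-1) 1)

/-! On vectors `(w, a w, b w, c w)` built from an eigenvector `w` of `L`, the matrix `W₂(L)` acts
blockwise by scalars, so the eigenvalue equation reduces to four scalar equations in `a, b, c, Λ`.
With `a = (1 - Λ)⁻¹`, `b = (1 - Λ)/(Λ² - 3Λ + 1)` and `c = a b`, the leaf and path rows hold because
`(2 - Λ)(1 - Λ) - 1 = Λ² - 3Λ + 1`, and the row at `w` is exactly the compatibility equation. -/

theorem whisker2_mulVec {n : ℕ} (L : Matrix (Fin n) (Fin n) ℝ) (x a b c : Fin n → ℝ) :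
    whisker2 L *ᵥ Sum.elim (Sum.elim x a) (Sum.elim b c) =
      Sum.elim (Sum.elim (L *ᵥ x + (2 : ℝ) • x - a - b) (a - x))
        (Sum.elim ((2 : ℝ) • b - x - c) (c - b)) := by
  simp only [whisker2, fromBlocks_mulVec, add_mulVec, neg_mulVec, one_mulVec, zero_mulVec,
    ofNat_mulVec, Sum.elim_comp_inl, Sum.elim_comp_inr, ← Sum.elim_add_add, add_zero, zero_add]
  congr 2 <;> abel

theorem whisker2_mulVec_eq_smul_of_scalars {n : ℕ} {L : Matrix (Fin n) (Fin n) ℝ}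
    {w : Fin n → ℝ} {lam Λ a b c : ℝ} (hw : L *ᵥ w = lam • w) (h₀ : lam + 2 - a - b = Λ)
    (ha : a - 1 = Λ * a) (hb : 2 * b - 1 - c = Λ * b) (hc : c - b = Λ * c) :
    whisker2 L *ᵥ Sum.elim (Sum.elim w (a • w)) (Sum.elim (b • w) (c • w)) =
      Λ • Sum.elim (Sum.elim w (a • w)) (Sum.elim (b • w) (c • w)) := by
  rw [whisker2_mulVec, hw]
  ext ((i | i) | (i | i)) <;>
    simp only [Sum.elim_inl, Sum.elim_inr, Pi.smul_apply, Pi.add_apply, Pi.sub_apply, smul_eq_mul]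
  · linear_combination w i * h₀
  · linear_combination w i * ha
  · linear_combination w i * hb
  · linear_combination w i * hc

theorem whisker2_eigenvector_lift {n : ℕ} (L : Matrix (Fin n) (Fin n) ℝ)
    (w : Fin n → ℝ) (lam Lam : ℝ) (hw : L.mulVec w = lam • w)
    (h1 : Lam ≠ 1) (h2 : Lam ^ 2 - 3 * Lam + 1 ≠ 0)
    (hcomp : lam + 2 = Lam + 1 / (1 - Lam) + (1 - Lam) / (Lam ^ 2 - 3 * Lam + 1)) :
    (whisker2 L).mulVec
        (Sum.elim (Sum.elim w ((1 - Lam)⁻¹ • w))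
          (Sum.elim (((1 - Lam) / (Lam ^ 2 - 3 * Lam + 1)) • w)
            ((1 - Lam)⁻¹ • ((1 - Lam) / (Lam ^ 2 - 3 * Lam + 1)) • w)))
      = Lam • (Sum.elim (Sum.elim w ((1 - Lam)⁻¹ • w))
          (Sum.elim (((1 - Lam) / (Lam ^ 2 - 3 * Lam + 1)) • w)
            ((1 - Lam)⁻¹ • ((1 - Lam) / (Lam ^ 2 - 3 * Lam + 1)) • w))) ∧
    (w ≠ 0 →
      Sum.elim (Sum.elim w ((1 - Lam)⁻¹ • w))
          (Sum.elim (((1 - Lam) / (Lam ^ 2 - 3 * Lam + 1)) • w)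
            ((1 - Lam)⁻¹ • ((1 - Lam) / (Lam ^ 2 - 3 * Lam + 1)) • w)) ≠ 0) ∧
    (∃ c : ℝ, (1 - Lam)⁻¹ • w = c • w) ∧
    (∃ c : ℝ, ((1 - Lam) / (Lam ^ 2 - 3 * Lam + 1)) • w = c • w) ∧
    (∃ c : ℝ, (1 - Lam)⁻¹ • ((1 - Lam) / (Lam ^ 2 - 3 * Lam + 1)) • w = c • w) := by
  set a := (1 - Lam)⁻¹
  set q := Lam ^ 2 - 3 * Lam + 1
  set b := (1 - Lam) / q
  have ha : a * (1 - Lam) = 1 := inv_mul_cancel₀ (sub_ne_zero.mpr h1.symm)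
  have hb : b * q = 1 - Lam := div_mul_cancel₀ _ h2
  have row1 : lam + 2 - a - b = Lam := by rw [hcomp, one_div]; ring
  have row2 : a - 1 = Lam * a := by linear_combination ha
  have row3 : 2 * b - 1 - a * b = Lam * b := by
    linear_combination a * hb - (b * (2 - Lam) - 1) * ha
  have row4 : a * b - b = Lam * (a * b) := by linear_combination b * row2
  rw [smul_smul]
  refine ⟨whisker2_mulVec_eq_smul_of_scalars hw row1 row2 row3 row4,
    fun hw0 h => hw0 ?_, ⟨a, rfl⟩, ⟨b, rfl⟩, ⟨a * b, rfl⟩⟩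
  exact funext fun i => congrFun h (.inl (.inl i))
end

section
/- Let L be a symmetric real n×n matrix, s ∈ ℝ, B a real n×r matrix, C a symmetric real r×r matrix, and L' = [[L + sI, B], [Bᵀ, C]] the (n+r)×(n+r) block matrix. Suppose w₁ ∈ ℝⁿ, β ∈ ℝʳ and Λ ∈ ℝ satisfy L'·[w₁ᵀ, βᵀ]ᵀ = Λ·[w₁ᵀ, βᵀ]ᵀ, that ΛI − C is invertible, and that w₁ is an eigenvector of B(ΛI − C)⁻¹Bᵀ, i.e. B(ΛI − C)⁻¹Bᵀ w₁ = μ w₁ for some μ ∈ ℝ. Then β = (ΛI − C)⁻¹Bᵀ w₁ and L w₁ = (Λ − s − μ) w₁; consequently, if in addition w₁ ≠ 0 and b₁ ∈ ℝⁿ satisfies w₁ᵀ b₁ = 0, then the pair (L, b₁) is uncontrollable. -/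
open Matrix

section BlockEigenvector

variable {m n R : Type*} [Fintype m] [Fintype n] [CommRing R]

theorem fromBlocks_mulVec_sumElim_eq_smul_iff {A : Matrix m m R} {B : Matrix m n R}
    {C : Matrix n m R} {D : Matrix n n R} {x : m → R} {y : n → R} {c : R} :
    fromBlocks A B C D *ᵥ Sum.elim x y = c • Sum.elim x y ↔
      A *ᵥ x + B *ᵥ y = c • x ∧ C *ᵥ x + D *ᵥ y = c • y := by
  have hsmul : c • Sum.elim x y = Sum.elim (c • x) (c • y) := by
    ext (i | i) <;> rfl
  rw [fromBlocks_mulVec, hsmul, Sum.elim_eq_iff]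
  simp only [Sum.elim_comp_inl, Sum.elim_comp_inr]

theorem eq_inv_mul_mulVec_of_mulVec_add_mulVec_eq_smul [DecidableEq n] {C : Matrix n m R}
    {D : Matrix n n R} {x : m → R} {y : n → R} {c : R} (hD : IsUnit (c • 1 - D))
    (h : C *ᵥ x + D *ᵥ y = c • y) : y = ((c • 1 - D)⁻¹ * C) *ᵥ x := by
  have hy : (c • 1 - D) *ᵥ y = C *ᵥ x := by
    rw [sub_mulVec, smul_mulVec, one_mulVec]
    linear_combination (norm := module) (-1 : R) • h
  rw [← mulVec_mulVec, ← hy, mulVec_mulVec,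
    nonsing_inv_mul _ ((isUnit_iff_isUnit_det _).mp hD), one_mulVec]

end BlockEigenvector

theorem general_growth_restrict_general {n r : ℕ}
    (L : Matrix (Fin n) (Fin n) ℝ) (s : ℝ)
    (B : Matrix (Fin n) (Fin r) ℝ)
    (C : Matrix (Fin r) (Fin r) ℝ)
    (w₁ : Fin n → ℝ) (β : Fin r → ℝ) (Lam μ : ℝ) (b₁ : Fin n → ℝ)
    (heig : (Matrix.fromBlocks (L + s • 1) B Bᵀ C).mulVec (Sum.elim w₁ β)
      = Lam • Sum.elim w₁ β)
    (hinv : IsUnit (Lam • (1 : Matrix (Fin r) (Fin r) ℝ) - C))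
    (heigB : (B * (Lam • (1 : Matrix (Fin r) (Fin r) ℝ) - C)⁻¹ * Bᵀ).mulVec w₁
      = μ • w₁) :
    β = ((Lam • (1 : Matrix (Fin r) (Fin r) ℝ) - C)⁻¹ * Bᵀ).mulVec w₁ ∧
    L.mulVec w₁ = (Lam - s - μ) • w₁ ∧
    (w₁ ≠ 0 → w₁ ⬝ᵥ b₁ = 0 → Uncontrollable L b₁) := by
  obtain ⟨htop, hbot⟩ := fromBlocks_mulVec_sumElim_eq_smul_iff.mp heig
  have hβ := eq_inv_mul_mulVec_of_mulVec_add_mulVec_eq_smul hinv hbot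
  have hBβ : B *ᵥ β = μ • w₁ := by
    rw [hβ, mulVec_mulVec, ← Matrix.mul_assoc, heigB]
  have hLw : L *ᵥ w₁ = (Lam - s - μ) • w₁ := by
    rw [add_mulVec, smul_mulVec, one_mulVec, hBβ] at htop
    linear_combination (norm := module) htop
  exact ⟨hβ, hLw, fun hw hb => ⟨Lam - s - μ, w₁, hw, hLw, hb⟩⟩

theorem general_growth_restrict {n r : ℕ}
    (L : Matrix (Fin n) (Fin n) ℝ) (hL : L.IsSymm) (s : ℝ)
    (B : Matrix (Fin n) (Fin r) ℝ)
    (C : Matrix (Fin r) (Fin r) ℝ) (hC : C.IsSymm)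
    (w₁ : Fin n → ℝ) (β : Fin r → ℝ) (Lam μ : ℝ) (b₁ : Fin n → ℝ)
    (heig : (Matrix.fromBlocks (L + s • 1) B Bᵀ C).mulVec (Sum.elim w₁ β)
      = Lam • Sum.elim w₁ β)
    (hinv : IsUnit (Lam • (1 : Matrix (Fin r) (Fin r) ℝ) - C))
    (heigB : (B * (Lam • (1 : Matrix (Fin r) (Fin r) ℝ) - C)⁻¹ * Bᵀ).mulVec w₁
      = μ • w₁) :
    β = ((Lam • (1 : Matrix (Fin r) (Fin r) ℝ) - C)⁻¹ * Bᵀ).mulVec w₁ ∧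
    L.mulVec w₁ = (Lam - s - μ) • w₁ ∧
    (w₁ ≠ 0 → w₁ ⬝ᵥ b₁ = 0 → Uncontrollable L b₁) :=
  general_growth_restrict_general L s B C w₁ β Lam μ b₁ heig hinv heigB
end

section
/- Let L be a symmetric real n×n matrix, s ∈ ℝ, B a real n×r matrix, C a symmetric real r×r matrix, and L' = [[L + sI, B], [Bᵀ, C]] the (n+r)×(n+r) block matrix. Suppose w ∈ ℝⁿ is nonzero with L w = λ w and wᵀ b = 0 for some λ ∈ ℝ and b ∈ ℝⁿ, and suppose there exists Λ ∈ ℝ such that ΛI − C is invertible and B(ΛI − C)⁻¹Bᵀ w = (Λ − λ − s) w. Then, with β = (ΛI − C)⁻¹Bᵀ w, the vector [wᵀ, βᵀ]ᵀ is nonzero, satisfies L'·[wᵀ, βᵀ]ᵀ = Λ·[wᵀ, βᵀ]ᵀ, and is orthogonal to [bᵀ, 0ᵀ]ᵀ; consequently the pair (L', [bᵀ, 0ᵀ]ᵀ) is uncontrollable. -/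
/-! The eigenvector `w` of the top-left block is completed by `β = (Λ I - C)⁻¹ Bᵀ w`:
this choice makes the bottom block row `Bᵀ w + C β = Λ β` hold identically, and the
hypothesis on `B (Λ I - C)⁻¹ Bᵀ` is exactly what the top block row
`(L + s I) w + B β = Λ w` needs. The lifted vector is orthogonal to `[b; 0]` because its
top part is `w`. -/

open Matrix

namespace Matrix

variable {m n R : Type*}

lemma sumElim_ne_zero_of_left_ne_zero [Zero R] {x : m → R} (y : n → R)
    (hx : x ≠ 0) : Sum.elim x y ≠ 0 := fun h => hx <| funext fun i => congrFun h (Sum.inl i)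

lemma fromBlocks_mulVec_sumElim_eq_smul [CommRing R] [Fintype m] [Fintype n]
    {A : Matrix m m R} {B : Matrix m n R} {D : Matrix n m R} {C : Matrix n n R}
    {x : m → R} {y : n → R} {μ : R}
    (htop : A *ᵥ x + B *ᵥ y = μ • x) (hbot : D *ᵥ x + C *ᵥ y = μ • y) :
    fromBlocks A B D C *ᵥ Sum.elim x y = μ • Sum.elim x y := by
  rw [fromBlocks_mulVec, Sum.elim_comp_inl, Sum.elim_comp_inr, htop, hbot]
  exact (Sum.comp_elim (μ • ·) x y).symm

lemma add_mulVec_inv_smul_one_sub_mulVec [CommRing R] [Fintype n] [DecidableEq n]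
    {C : Matrix n n R} {μ : R} (hinv : IsUnit (μ • (1 : Matrix n n R) - C)) (u : n → R) :
    u + C *ᵥ ((μ • (1 : Matrix n n R) - C)⁻¹ *ᵥ u)
      = μ • ((μ • (1 : Matrix n n R) - C)⁻¹ *ᵥ u) := by
  have hu :
      (μ • (1 : Matrix n n R) - C) *ᵥ ((μ • (1 : Matrix n n R) - C)⁻¹ *ᵥ u) = u := by
    rw [mulVec_mulVec, mul_nonsing_inv _ ((isUnit_iff_isUnit_det _).mp hinv), one_mulVec]
  rw [sub_mulVec, smul_mulVec, one_mulVec] at hu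
  generalize (μ • (1 : Matrix n n R) - C)⁻¹ *ᵥ u = β at hu ⊢
  rw [← hu, sub_add_cancel]

lemma fromBlocks_mulVec_lift_eq_smul [CommRing R] [Fintype m] [Fintype n] [DecidableEq n]
    {A : Matrix m m R} {B : Matrix m n R} {D : Matrix n m R} {C : Matrix n n R} {w : m → R}
    {μ Λ : R} (heig : A *ᵥ w = μ • w)
    (hinv : IsUnit (Λ • (1 : Matrix n n R) - C))
    (hB : (B * (Λ • (1 : Matrix n n R) - C)⁻¹ * D) *ᵥ w = (Λ - μ) • w) :
    fromBlocks A B D C *ᵥ Sum.elim w (((Λ • (1 : Matrix n n R) - C)⁻¹ * D) *ᵥ w)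
      = Λ • Sum.elim w (((Λ • (1 : Matrix n n R) - C)⁻¹ * D) *ᵥ w) := by
  rw [← mulVec_mulVec] at hB ⊢
  refine fromBlocks_mulVec_sumElim_eq_smul ?_ (add_mulVec_inv_smul_one_sub_mulVec hinv _)
  rw [heig, mulVec_mulVec, hB, ← add_smul, add_sub_cancel]

end Matrix

theorem general_growth_lift_general {n r : ℕ}
    (L : Matrix (Fin n) (Fin n) ℝ) (s : ℝ)
    (B : Matrix (Fin n) (Fin r) ℝ)
    (C : Matrix (Fin r) (Fin r) ℝ)
    (w : Fin n → ℝ) (hw : w ≠ 0) (lam : ℝ) (b : Fin n → ℝ)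
    (heig : L.mulVec w = lam • w) (horth : w ⬝ᵥ b = 0)
    (Lam : ℝ)
    (hinv : IsUnit (Lam • (1 : Matrix (Fin r) (Fin r) ℝ) - C))
    (hB : (B * (Lam • (1 : Matrix (Fin r) (Fin r) ℝ) - C)⁻¹ * Bᵀ).mulVec w
      = (Lam - lam - s) • w) :
    Sum.elim w (((Lam • (1 : Matrix (Fin r) (Fin r) ℝ) - C)⁻¹ * Bᵀ).mulVec w) ≠ 0 ∧
    (Matrix.fromBlocks (L + s • 1) B Bᵀ C).mulVec
        (Sum.elim w (((Lam • (1 : Matrix (Fin r) (Fin r) ℝ) - C)⁻¹ * Bᵀ).mulVec w))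
      = Lam • Sum.elim w
          (((Lam • (1 : Matrix (Fin r) (Fin r) ℝ) - C)⁻¹ * Bᵀ).mulVec w) ∧
    Sum.elim w (((Lam • (1 : Matrix (Fin r) (Fin r) ℝ) - C)⁻¹ * Bᵀ).mulVec w) ⬝ᵥ
        Sum.elim b (0 : Fin r → ℝ) = 0 ∧
    Uncontrollable (Matrix.fromBlocks (L + s • 1) B Bᵀ C) (Sum.elim b 0) := by
  have hshift : (L + s • 1) *ᵥ w = (lam + s) • w := by
    rw [add_mulVec, heig, smul_mulVec, one_mulVec, add_smul]
  have hne := sumElim_ne_zero_of_left_ne_zero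
    (((Lam • (1 : Matrix (Fin r) (Fin r) ℝ) - C)⁻¹ * Bᵀ) *ᵥ w) hw
  have hmul := fromBlocks_mulVec_lift_eq_smul (B := B) (D := Bᵀ) hshift hinv
    (by rw [hB, sub_sub])
  have hdot : Sum.elim w (((Lam • (1 : Matrix (Fin r) (Fin r) ℝ) - C)⁻¹ * Bᵀ) *ᵥ w)
      ⬝ᵥ Sum.elim b (0 : Fin r → ℝ) = 0 := by
    rw [sumElim_dotProduct_sumElim, horth, dotProduct_zero, add_zero]
  exact ⟨hne, hmul, hdot, Lam, _, hne, hmul, hdot⟩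

theorem general_growth_lift {n r : ℕ}
    (L : Matrix (Fin n) (Fin n) ℝ) (hL : L.IsSymm) (s : ℝ)
    (B : Matrix (Fin n) (Fin r) ℝ)
    (C : Matrix (Fin r) (Fin r) ℝ) (hC : C.IsSymm)
    (w : Fin n → ℝ) (hw : w ≠ 0) (lam : ℝ) (b : Fin n → ℝ)
    (heig : L.mulVec w = lam • w) (horth : w ⬝ᵥ b = 0)
    (Lam : ℝ)
    (hinv : IsUnit (Lam • (1 : Matrix (Fin r) (Fin r) ℝ) - C))
    (hB : (B * (Lam • (1 : Matrix (Fin r) (Fin r) ℝ) - C)⁻¹ * Bᵀ).mulVec w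
      = (Lam - lam - s) • w) :
    Sum.elim w (((Lam • (1 : Matrix (Fin r) (Fin r) ℝ) - C)⁻¹ * Bᵀ).mulVec w) ≠ 0 ∧
    (Matrix.fromBlocks (L + s • 1) B Bᵀ C).mulVec
        (Sum.elim w (((Lam • (1 : Matrix (Fin r) (Fin r) ℝ) - C)⁻¹ * Bᵀ).mulVec w))
      = Lam • Sum.elim w
          (((Lam • (1 : Matrix (Fin r) (Fin r) ℝ) - C)⁻¹ * Bᵀ).mulVec w) ∧
    Sum.elim w (((Lam • (1 : Matrix (Fin r) (Fin r) ℝ) - C)⁻¹ * Bᵀ).mulVec w) ⬝ᵥ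
        Sum.elim b (0 : Fin r → ℝ) = 0 ∧
    Uncontrollable (Matrix.fromBlocks (L + s • 1) B Bᵀ C) (Sum.elim b 0) :=
  general_growth_lift_general L s B C w hw lam b heig horth Lam hinv hB
end

section
/- Let L ∈ ℝ^{n×n} be the Laplacian of a connected undirected graph (symmetric positive semidefinite, zero row sums, nonpositive off-diagonal entries, with grounded Laplacian L[2:n] positive definite), and let L' = W₁(L) = [[L+I, −I], [−I, I]] be its 2n×2n whiskered matrix. Then the grounded matrix L'[2:2n] (delete the first row and column of L') is positive definite, and Tr((L'[2:2n])⁻¹) ≥ n + Tr((L[2:n] + I)⁻¹); equivalently, the controllability Gramian P' = ½(L'[2:2n])⁻¹ satisfies Tr(P') ≥ (n + C₁)/2 with C₁ = Tr((L[2:n] + I)⁻¹). -/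
/-!
Grounding the whiskered matrix at the first node leaves, up to reordering, the block matrix
`[[M + E Eᵀ, -E], [-Eᵀ, I]]`, where `M = L[2:n]` and `E` is the identity with its first row
deleted, so that `E Eᵀ = I`. Its Schur complement with respect to the identity block is `M`, so it
is positive definite, and its inverse is `[[M⁻¹, M⁻¹ E], [Eᵀ M⁻¹, I + Eᵀ M⁻¹ E]]`, whose trace is
`2 tr M⁻¹ + n`. The resolvent identity `M⁻¹ - (M + I)⁻¹ = ((M + I) M)⁻¹` gives
`tr (M + I)⁻¹ ≤ tr M⁻¹`, and `tr M⁻¹ ≥ 0` finishes the bound.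
-/

open Matrix

/-- The principal submatrix of `A` obtained by deleting the row and column
indexed by `i₀` (grounding at node `i₀`). -/
def dropIdx {m : Type*} (i₀ : m) (A : Matrix m m ℝ) :
    Matrix {i : m // i ≠ i₀} {i : m // i ≠ i₀} ℝ :=
  A.submatrix Subtype.val Subtype.val

namespace Matrix

variable {R : Type*} {l m p : Type*}

lemma trace_submatrix_equiv [AddCommMonoid R] [Fintype l] [Fintype m]
    (A : Matrix m m R) (e : l ≃ m) : (A.submatrix e e).trace = A.trace :=
  e.sum_comp A.diag

lemma trace_fromBlocks [AddCommMonoid R] [Fintype m] [Fintype p] (A : Matrix m m R)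
    (B : Matrix m p R) (C : Matrix p m R) (D : Matrix p p R) :
    (fromBlocks A B C D).trace = A.trace + D.trace :=
  Fintype.sum_sum_type _

section BlockInverse

variable [Fintype m] [Fintype p] [DecidableEq m] [DecidableEq p]

lemma fromBlocks_mul_fromBlocks_eq_one [CommRing R] {M : Matrix m m R} (hM : IsUnit M.det)
    (E : Matrix m p R) :
    fromBlocks (M + E * Eᵀ) (-E) (-Eᵀ) 1 *
      fromBlocks M⁻¹ (M⁻¹ * E) (Eᵀ * M⁻¹) (1 + Eᵀ * M⁻¹ * E) = 1 := by
  have hMM : M * M⁻¹ = 1 := mul_nonsing_inv M hM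
  rw [fromBlocks_multiply, ← fromBlocks_one]
  congr 1 <;> simp only [Matrix.add_mul, Matrix.mul_add, Matrix.neg_mul, Matrix.one_mul,
    Matrix.mul_one, Matrix.mul_assoc, ← Matrix.mul_assoc M, hMM] <;> abel

lemma inv_fromBlocks_eq [CommRing R] {M : Matrix m m R} (hM : IsUnit M.det) (E : Matrix m p R) :
    (fromBlocks (M + E * Eᵀ) (-E) (-Eᵀ) 1)⁻¹ =
      fromBlocks M⁻¹ (M⁻¹ * E) (Eᵀ * M⁻¹) (1 + Eᵀ * M⁻¹ * E) :=
  inv_eq_right_inv (fromBlocks_mul_fromBlocks_eq_one hM E)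

lemma trace_inv_fromBlocks [CommRing R] {M : Matrix m m R} (hM : IsUnit M.det)
    {E : Matrix m p R} (hE : E * Eᵀ = 1) :
    (fromBlocks (M + E * Eᵀ) (-E) (-Eᵀ) 1)⁻¹.trace = 2 * M⁻¹.trace + Fintype.card p := by
  rw [inv_fromBlocks_eq hM, trace_fromBlocks, trace_add, trace_one, Matrix.mul_assoc,
    trace_mul_comm, Matrix.mul_assoc, hE, Matrix.mul_one]
  ring

lemma PosDef.fromBlocks_add_mul_transpose {M : Matrix m m ℝ} (hM : M.PosDef)
    (E : Matrix m p ℝ) :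
    (fromBlocks (M + E * Eᵀ) (-E) (-Eᵀ) 1).PosDef := by
  have hT : (-E)ᴴ = -Eᵀ := by
    rw [conjTranspose_eq_transpose_of_trivial, transpose_neg]
  have hpsd : (fromBlocks (M + E * Eᵀ) (-E) (-Eᵀ) 1).PosSemidef := by
    let _ : Invertible (1 : Matrix p p ℝ) := invertibleOne
    rw [← hT, PosDef.fromBlocks₂₂ _ _ PosDef.one, inv_one, Matrix.mul_one, hT, Matrix.neg_mul,
      Matrix.mul_neg, neg_neg, add_sub_cancel_right]
    exact hM.posSemidef
  exact hpsd.posDef_iff_det_ne_zero.mpr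
    (det_ne_zero_of_right_inverse (fromBlocks_mul_fromBlocks_eq_one hM.det_pos.ne'.isUnit E))

lemma PosDef.trace_inv_add_one_le {M : Matrix m m ℝ} (hM : M.PosDef) :
    (M + 1)⁻¹.trace ≤ M⁻¹.trace := by
  have hM1 : IsUnit (M + 1).det := (hM.add_posSemidef PosSemidef.one).det_pos.ne'.isUnit
  have hresolvent : M⁻¹ = (M + 1)⁻¹ + M⁻¹ * (M + 1)⁻¹ := by
    calc M⁻¹ = M⁻¹ * (M + 1) * (M + 1)⁻¹ := by
          rw [Matrix.mul_assoc, mul_nonsing_inv _ hM1, Matrix.mul_one]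
      _ = (M + 1)⁻¹ + M⁻¹ * (M + 1)⁻¹ := by
          rw [Matrix.mul_add, nonsing_inv_mul _ hM.det_pos.ne'.isUnit, Matrix.mul_one,
            Matrix.add_mul, Matrix.one_mul]
  have hprod : ((M + 1) * M).PosDef := by
    have hsq : (M + 1) * M = Mᴴ * M + M := by
      rw [Matrix.add_mul, Matrix.one_mul, hM.isHermitian.eq]
    exact hsq ▸ PosDef.posSemidef_add (posSemidef_conjTranspose_mul_self M) hM
  have hnonneg : 0 ≤ (M⁻¹ * (M + 1)⁻¹).trace := by
    rw [← mul_inv_rev]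
    exact hprod.inv.posSemidef.trace_nonneg
  rw [hresolvent, trace_add]
  linarith

end BlockInverse

end Matrix


def Equiv.subtypeSumNeInl {m p : Type*} (i₀ : m) :
    {i : m ⊕ p // i ≠ Sum.inl i₀} ≃ {i : m // i ≠ i₀} ⊕ p :=
  Equiv.subtypeSum.trans <| Equiv.sumCongr
    (Equiv.subtypeEquivRight fun _ => Sum.inl_injective.ne_iff)
    (Equiv.subtypeUnivEquiv fun _ => Sum.inr_ne_inl)

lemma dropIdx_inl_fromBlocks {m p : Type*} (i₀ : m) (A : Matrix m m ℝ) (B : Matrix m p ℝ)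
    (C : Matrix p m ℝ) (D : Matrix p p ℝ) :
    dropIdx (Sum.inl i₀) (fromBlocks A B C D) =
      (fromBlocks (dropIdx i₀ A) (B.submatrix Subtype.val id) (C.submatrix id Subtype.val)
        D).submatrix (Equiv.subtypeSumNeInl i₀) (Equiv.subtypeSumNeInl i₀) := by
  ext ⟨i | i, hi⟩ ⟨j | j, hj⟩ <;> rfl

def dropIdxProj {m : Type*} [DecidableEq m] (i₀ : m) : Matrix {i : m // i ≠ i₀} m ℝ :=
  (1 : Matrix m m ℝ).submatrix Subtype.val id

lemma dropIdxProj_mul_transpose {m : Type*} [Fintype m] [DecidableEq m] (i₀ : m) :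
    dropIdxProj i₀ * (dropIdxProj i₀)ᵀ = 1 := by
  rw [dropIdxProj, transpose_submatrix, transpose_one,
    ← submatrix_mul _ _ _ _ _ Function.bijective_id, Matrix.mul_one,
    submatrix_one _ Subtype.val_injective]

lemma dropIdx_whisker1 {n : ℕ} (L : Matrix (Fin n) (Fin n) ℝ) (i₀ : Fin n) :
    dropIdx (Sum.inl i₀) (whisker1 L) =
      (fromBlocks (dropIdx i₀ L + dropIdxProj i₀ * (dropIdxProj i₀)ᵀ) (-dropIdxProj i₀)
        (-(dropIdxProj i₀)ᵀ) 1).submatrix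
        (Equiv.subtypeSumNeInl i₀) (Equiv.subtypeSumNeInl i₀) := by
  rw [whisker1, dropIdx_inl_fromBlocks, dropIdxProj_mul_transpose]
  congr 2
  · simp only [dropIdx, submatrix_add, Pi.add_apply, submatrix_one _ Subtype.val_injective]
  · simp only [dropIdxProj, submatrix_neg, Pi.neg_apply, transpose_submatrix, transpose_one]

theorem whisker1_gramian_bound_general {n : ℕ} (hn : 0 < n)
    (L : Matrix (Fin n) (Fin n) ℝ)
    (hground : (dropIdx (⟨0, hn⟩ : Fin n) L).PosDef) :
    (dropIdx (Sum.inl ⟨0, hn⟩ : Fin n ⊕ Fin n) (whisker1 L)).PosDef ∧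
    Matrix.trace ((dropIdx (Sum.inl ⟨0, hn⟩ : Fin n ⊕ Fin n) (whisker1 L))⁻¹)
      ≥ (n : ℝ) + Matrix.trace ((dropIdx (⟨0, hn⟩ : Fin n) L + 1)⁻¹) ∧
    Matrix.trace
        ((2 : ℝ)⁻¹ • (dropIdx (Sum.inl ⟨0, hn⟩ : Fin n ⊕ Fin n) (whisker1 L))⁻¹)
      ≥ ((n : ℝ) + Matrix.trace ((dropIdx (⟨0, hn⟩ : Fin n) L + 1)⁻¹)) / 2 := by
  have hblocks := dropIdx_whisker1 L ⟨0, hn⟩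
  have htrace : ((dropIdx (Sum.inl ⟨0, hn⟩ : Fin n ⊕ Fin n) (whisker1 L))⁻¹).trace =
      2 * (dropIdx ⟨0, hn⟩ L)⁻¹.trace + n := by
    rw [hblocks, inv_submatrix_equiv, trace_submatrix_equiv,
      trace_inv_fromBlocks hground.det_pos.ne'.isUnit (dropIdxProj_mul_transpose _),
      Fintype.card_fin]
  have hcompare := hground.trace_inv_add_one_le
  have hnonneg := hground.inv.posSemidef.trace_nonneg
  refine ⟨hblocks ▸ (hground.fromBlocks_add_mul_transpose _).submatrix (Equiv.injective _), ?_, ?_⟩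
  · linarith
  · rw [trace_smul, smul_eq_mul]
    linarith

theorem whisker1_gramian_bound {n : ℕ} (hn : 0 < n)
    (L : Matrix (Fin n) (Fin n) ℝ)
    (hsym : L.IsSymm) (hpsd : L.PosSemidef)
    (hrow : ∀ i, ∑ j, L i j = 0)
    (hoff : ∀ i j, i ≠ j → L i j ≤ 0)
    (hground : (dropIdx (⟨0, hn⟩ : Fin n) L).PosDef) :
    (dropIdx (Sum.inl ⟨0, hn⟩ : Fin n ⊕ Fin n) (whisker1 L)).PosDef ∧
    Matrix.trace ((dropIdx (Sum.inl ⟨0, hn⟩ : Fin n ⊕ Fin n) (whisker1 L))⁻¹)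
      ≥ (n : ℝ) + Matrix.trace ((dropIdx (⟨0, hn⟩ : Fin n) L + 1)⁻¹) ∧
    Matrix.trace
        ((2 : ℝ)⁻¹ • (dropIdx (Sum.inl ⟨0, hn⟩ : Fin n ⊕ Fin n) (whisker1 L))⁻¹)
      ≥ ((n : ℝ) + Matrix.trace ((dropIdx (⟨0, hn⟩ : Fin n) L + 1)⁻¹)) / 2 :=
  whisker1_gramian_bound_general hn L hground
end

section
/- Let L ∈ ℝ^{n×n} be the Laplacian of a connected undirected graph (symmetric positive semidefinite, zero row sums, nonpositive off-diagonal entries, with grounded Laplacian L[2:n] positive definite), and let L'' = W₂(L) be its 4n×4n path-whiskered matrix. Then the grounded matrix L''[2:4n] (delete the first row and column of L'') is positive definite, and Tr((L''[2:4n])⁻¹) ≥ 4n + Tr((L[2:n] + 2I)⁻¹); equivalently, the controllability Gramian P'' = ½(L''[2:4n])⁻¹ satisfies Tr(P'') ≥ (4n + C₂)/2 with C₂ = Tr((L[2:n] + 2I)⁻¹). -/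
open Matrix

/-!
Writing a vector on the grounded nodes of `W₂(L)` as `(a, b, c, d)` with `a` vanishing at the
grounded node, its quadratic form is `⟪a, L a⟫ + ‖a - b‖² + ‖a - c‖² + ‖c - d‖²`, so it is
positive definite as soon as `L[2:n]` is. For the trace, the variational formula
`⟪w, A⁻¹ w⟫ = max_v (2 ⟪v, w⟫ - ⟪v, A v⟫)`, restricted to test vectors supported on a principal
submatrix, shows that each diagonal entry of `A⁻¹` dominates the corresponding entry of the
inverse of any principal submatrix. Splitting the grounded nodes into the original ones, with
principal submatrix `L[2:n] + 2I`, and the whisker ones, with principal submatrix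
`I ⊕ [[2I, -I], [-I, I]]` whose inverse `I ⊕ [[I, I], [I, 2I]]` has trace `4n`, gives the bound.
-/

section PrincipalSubmatrix

variable {m k : Type*} [Fintype m] [Fintype k]

lemma dotProduct_submatrix_mulVec_comp (W : Matrix m m ℝ) {e : k → m} (he : e.Injective)
    {z : m → ℝ} (hz : ∀ p ∉ Set.range e, z p = 0) :
    (z ∘ e) ⬝ᵥ W.submatrix e e *ᵥ (z ∘ e) = z ⬝ᵥ W *ᵥ z := by
  have hmulVec : ∀ i, (W.submatrix e e *ᵥ (z ∘ e)) i = (W *ᵥ z) (e i) := fun i =>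
    Fintype.sum_of_injective e he _ _ (fun p hp => by simp [hz p hp]) fun _ => rfl
  exact Fintype.sum_of_injective e he _ _ (fun p hp => by simp [hz p hp])
    fun i => by simp [hmulVec]

lemma dotProduct_dropIdx_mulVec [DecidableEq m] (W : Matrix m m ℝ) {g : m} {z : m → ℝ}
    (hz : z g = 0) :
    (fun i : {i // i ≠ g} => z i) ⬝ᵥ dropIdx g W *ᵥ (fun i => z i) = z ⬝ᵥ W *ᵥ z :=
  dotProduct_submatrix_mulVec_comp W Subtype.val_injective fun p hp =>
    by_contra fun hp' => hp ⟨⟨p, fun h => hp' (h ▸ hz)⟩, rfl⟩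

variable [DecidableEq m] [DecidableEq k]

-- Complete the square around `v = A⁻¹ w`, where equality holds.
lemma Matrix.PosDef.two_mul_dotProduct_sub_le {A : Matrix m m ℝ} (hA : A.PosDef)
    (v w : m → ℝ) : 2 * (v ⬝ᵥ w) - v ⬝ᵥ A *ᵥ v ≤ w ⬝ᵥ A⁻¹ *ᵥ w := by
  have hAinv : A *ᵥ (A⁻¹ *ᵥ w) = w := by
    rw [mulVec_mulVec, mul_nonsing_inv A ((isUnit_iff_isUnit_det A).mp hA.isUnit), one_mulVec]
  have hsymm : ∀ x y, x ⬝ᵥ A *ᵥ y = y ⬝ᵥ A *ᵥ x := fun x y => by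
    rw [dotProduct_mulVec, ← mulVec_transpose, (isHermitian_iff_isSymm.mp hA.isHermitian).eq,
      dotProduct_comm]
  have hsq := hA.posSemidef.dotProduct_mulVec_nonneg (v - A⁻¹ *ᵥ w)
  simp only [star_trivial, mulVec_sub, sub_dotProduct, dotProduct_sub, hAinv] at hsq
  rw [hsymm (A⁻¹ *ᵥ w) v, hAinv, dotProduct_comm (A⁻¹ *ᵥ w) w] at hsq
  linarith

lemma Matrix.PosDef.inv_submatrix_apply_self_le {A : Matrix m m ℝ} (hA : A.PosDef)
    {e : k → m} (he : e.Injective) (j : k) :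
    (A.submatrix e e)⁻¹ j j ≤ A⁻¹ (e j) (e j) := by
  set B := A.submatrix e e
  -- Test with `B⁻¹ eⱼ` extended by zero: there the quadratic form of `A` is that of `B`.
  set u := B⁻¹ *ᵥ Pi.single j 1
  set z : m → ℝ := Function.extend e u 0
  have hzu : z ∘ e = u := Function.extend_comp he u 0
  have hz : ∀ p ∉ Set.range e, z p = 0 := fun p hp =>
    Function.extend_apply' _ _ _ fun ⟨i, hi⟩ => hp ⟨i, hi⟩
  have huj : u j = B⁻¹ j j := by simp [u]
  have hBu : u ⬝ᵥ B *ᵥ u = B⁻¹ j j := by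
    rw [mulVec_mulVec, mul_nonsing_inv B ((isUnit_iff_isUnit_det B).mp (hA.submatrix he).isUnit),
      one_mulVec, dotProduct_single, mul_one, huj]
  have hzA : z ⬝ᵥ A *ᵥ z = B⁻¹ j j := by
    rw [← dotProduct_submatrix_mulVec_comp A he hz, hzu, hBu]
  have hzj : z ⬝ᵥ Pi.single (e j) 1 = B⁻¹ j j := by
    rw [dotProduct_single, mul_one, ← Function.comp_apply (f := z), hzu, huj]
  have := hA.two_mul_dotProduct_sub_le z (Pi.single (e j) 1)
  rw [hzA, hzj, single_one_dotProduct, mulVec_single_one, col_apply] at this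
  linarith

lemma Matrix.PosDef.trace_inv_submatrix_inl_add_inr_le {α β : Type*} [Fintype α] [Fintype β]
    [DecidableEq α] [DecidableEq β] {A : Matrix m m ℝ} (hA : A.PosDef) {e : α ⊕ β → m}
    (he : e.Injective) :
    trace (A.submatrix (e ∘ Sum.inl) (e ∘ Sum.inl))⁻¹
      + trace (A.submatrix (e ∘ Sum.inr) (e ∘ Sum.inr))⁻¹ ≤ trace A⁻¹ := by
  have hinl := Finset.sum_le_sum fun a (_ : a ∈ Finset.univ) =>
    hA.inv_submatrix_apply_self_le (he.comp Sum.inl_injective) a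
  have hinr := Finset.sum_le_sum fun b (_ : b ∈ Finset.univ) =>
    hA.inv_submatrix_apply_self_le (he.comp Sum.inr_injective) b
  have hrange := Finset.sum_le_univ_sum_of_nonneg (s := Finset.univ.map ⟨e, he⟩)
    (f := fun p => A⁻¹ p p) fun _ => hA.inv.diag_pos.le
  rw [Finset.sum_map, Fintype.sum_sum_type] at hrange
  exact (add_le_add hinl hinr).trans hrange

end PrincipalSubmatrix

section Whisker

variable {n : ℕ}

lemma sumElim_dotProduct_whisker2_mulVec (L : Matrix (Fin n) (Fin n) ℝ)
    (a b c d : Fin n → ℝ) :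
    Sum.elim (Sum.elim a b) (Sum.elim c d) ⬝ᵥ
        whisker2 L *ᵥ Sum.elim (Sum.elim a b) (Sum.elim c d)
      = a ⬝ᵥ L *ᵥ a + ((a - b) ⬝ᵥ (a - b) + (a - c) ⬝ᵥ (a - c) + (c - d) ⬝ᵥ (c - d)) := by
  have htwo : ∀ v : Fin n → ℝ, (2 : Matrix (Fin n) (Fin n) ℝ) *ᵥ v = v + v := fun v => by
    rw [← one_add_one_eq_two, add_mulVec, one_mulVec]
  simp only [whisker2, fromBlocks_mulVec, sumElim_dotProduct_sumElim, add_mulVec, neg_mulVec,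
    one_mulVec, zero_mulVec, htwo, dotProduct_add, dotProduct_neg, dotProduct_zero,
    sub_dotProduct, dotProduct_sub, Sum.elim_comp_inl, Sum.elim_comp_inr]
  rw [dotProduct_comm b a, dotProduct_comm c a, dotProduct_comm d c]
  ring

lemma dropIdx_whisker2_isHermitian {L : Matrix (Fin n) (Fin n) ℝ} {i0 : Fin n}
    (hL : (dropIdx i0 L).IsHermitian) :
    (dropIdx (Sum.inl (Sum.inl i0) : (Fin n ⊕ Fin n) ⊕ (Fin n ⊕ Fin n))
      (whisker2 L)).IsHermitian := by
  have hsymm : ∀ i j, i ≠ i0 → j ≠ i0 → L j i = L i j := fun i j hi hj => by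
    simpa [dropIdx] using hL.apply ⟨i, hi⟩ ⟨j, hj⟩
  refine IsHermitian.ext ?_
  rintro ⟨(i | i) | (i | i), hi⟩ ⟨(j | j) | (j | j), hj⟩ <;>
    simp [dropIdx, whisker2, one_apply, ofNat_apply, eq_comm]
  exact hsymm j i (by simpa using hj) (by simpa using hi)

lemma dropIdx_whisker2_posDef {L : Matrix (Fin n) (Fin n) ℝ} {i0 : Fin n}
    (hground : (dropIdx i0 L).PosDef) :
    (dropIdx (Sum.inl (Sum.inl i0) : (Fin n ⊕ Fin n) ⊕ (Fin n ⊕ Fin n)) (whisker2 L)).PosDef := by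
  set g : (Fin n ⊕ Fin n) ⊕ (Fin n ⊕ Fin n) := Sum.inl (Sum.inl i0)
  refine PosDef.of_dotProduct_mulVec_pos (dropIdx_whisker2_isHermitian hground.isHermitian)
    fun x hx => ?_
  set z : (Fin n ⊕ Fin n) ⊕ (Fin n ⊕ Fin n) → ℝ := Function.extend Subtype.val x 0
  have hzx : (fun p : {p // p ≠ g} => z p) = x := Function.extend_comp Subtype.val_injective x 0
  have hzg : z g = 0 := Function.extend_apply' _ _ _ fun ⟨p, hp⟩ => p.2 hp
  set a : Fin n → ℝ := fun i => z (.inl (.inl i))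
  set b : Fin n → ℝ := fun i => z (.inl (.inr i))
  set c : Fin n → ℝ := fun i => z (.inr (.inl i))
  set d : Fin n → ℝ := fun i => z (.inr (.inr i))
  have hz : z = Sum.elim (Sum.elim a b) (Sum.elim c d) := by ext ((i | i) | (i | i)) <;> rfl
  have haL := dotProduct_dropIdx_mulVec L (g := i0) (z := a) hzg
  have hsq : ∀ v : Fin n → ℝ, 0 ≤ v ⬝ᵥ v := fun v =>
    Finset.sum_nonneg fun i _ => mul_self_nonneg (v i)
  have hab := hsq (a - b)
  have hac := hsq (a - c)
  have hcd := hsq (c - d)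
  rw [star_trivial, ← hzx, dotProduct_dropIdx_mulVec _ hzg, hz,
    sumElim_dotProduct_whisker2_mulVec, ← haL]
  by_contra! hle
  have hag : (fun i : {i // i ≠ i0} => a i) = 0 := by
    by_contra hne
    have := hground.dotProduct_mulVec_pos hne
    rw [star_trivial] at this
    linarith
  have ha : a = 0 := by
    ext i
    by_cases hi : i = i0
    · exact hi ▸ hzg
    · exact congrFun hag ⟨i, hi⟩
  rw [hag, zero_dotProduct, zero_add] at hle
  have hb : b = 0 := (sub_eq_zero.mp (dotProduct_self_eq_zero.mp (by linarith))).symm.trans ha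
  have hc : c = 0 := (sub_eq_zero.mp (dotProduct_self_eq_zero.mp (by linarith))).symm.trans ha
  have hd : d = 0 := (sub_eq_zero.mp (dotProduct_self_eq_zero.mp (by linarith))).symm.trans hc
  refine hx ?_
  rw [← hzx, hz, ha, hb, hc, hd]
  ext ⟨(i | i) | (i | i), _⟩ <;> rfl

lemma inv_fromBlocks_one_path (ι : Type*) [Fintype ι] [DecidableEq ι] :
    (fromBlocks 1 0 0 (fromBlocks 2 (-1) (-1) 1) : Matrix (ι ⊕ (ι ⊕ ι)) (ι ⊕ (ι ⊕ ι)) ℝ)⁻¹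
      = fromBlocks 1 0 0 (fromBlocks 1 1 1 2) := by
  refine inv_eq_right_inv ?_
  simp only [fromBlocks_multiply, mul_one, Matrix.mul_zero, add_zero, Matrix.zero_mul,
    Matrix.mul_one, neg_mul, one_mul, add_neg_cancel, neg_add_cancel, zero_add, ← fromBlocks_one,
    fromBlocks_inj, true_and]
  norm_num

lemma trace_inv_fromBlocks_one_path (ι : Type*) [Fintype ι] [DecidableEq ι] :
    trace (fromBlocks 1 0 0 (fromBlocks 2 (-1) (-1) 1) : Matrix (ι ⊕ (ι ⊕ ι)) (ι ⊕ (ι ⊕ ι)) ℝ)⁻¹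
      = 4 * Fintype.card ι := by
  rw [inv_fromBlocks_one_path]
  simp only [trace, diag_apply, Fintype.sum_sum_type, fromBlocks_apply₁₁, fromBlocks_apply₂₂,
    one_apply_eq, ofNat_apply, ↓reduceIte, Finset.sum_const, Finset.card_univ, nsmul_eq_mul,
    mul_one, Nat.cast_ofNat]
  ring

def whisker2GroundedEmb (i0 : Fin n) :
    {i // i ≠ i0} ⊕ (Fin n ⊕ (Fin n ⊕ Fin n)) →
      {p : (Fin n ⊕ Fin n) ⊕ (Fin n ⊕ Fin n) // p ≠ Sum.inl (Sum.inl i0)}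
  | .inl i => ⟨.inl (.inl i), by simpa using i.2⟩
  | .inr (.inl i) => ⟨.inl (.inr i), by simp⟩
  | .inr (.inr (.inl i)) => ⟨.inr (.inl i), by simp⟩
  | .inr (.inr (.inr i)) => ⟨.inr (.inr i), by simp⟩

lemma whisker2GroundedEmb_injective (i0 : Fin n) : (whisker2GroundedEmb i0).Injective := by
  rintro (i | i | i | i) (j | j | j | j) h <;> simp_all [whisker2GroundedEmb, Subtype.ext_iff]

lemma submatrix_whisker2GroundedEmb_inl (L : Matrix (Fin n) (Fin n) ℝ) (i0 : Fin n) :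
    (dropIdx (Sum.inl (Sum.inl i0)) (whisker2 L)).submatrix
        (whisker2GroundedEmb i0 ∘ Sum.inl) (whisker2GroundedEmb i0 ∘ Sum.inl)
      = dropIdx i0 L + 2 := by
  ext i j
  simp [dropIdx, whisker2, whisker2GroundedEmb, ofNat_apply, Subtype.ext_iff]

lemma submatrix_whisker2GroundedEmb_inr (L : Matrix (Fin n) (Fin n) ℝ) (i0 : Fin n) :
    (dropIdx (Sum.inl (Sum.inl i0)) (whisker2 L)).submatrix
        (whisker2GroundedEmb i0 ∘ Sum.inr) (whisker2GroundedEmb i0 ∘ Sum.inr)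
      = fromBlocks 1 0 0 (fromBlocks 2 (-1) (-1) 1) := by
  ext (i | i | i) (j | j | j) <;> simp [dropIdx, whisker2, whisker2GroundedEmb]

end Whisker

theorem whisker2_gramian_bound_general {n : ℕ} (hn : 0 < n)
    (L : Matrix (Fin n) (Fin n) ℝ)
    (hground : (dropIdx (⟨0, hn⟩ : Fin n) L).PosDef) :
    (dropIdx (Sum.inl (Sum.inl ⟨0, hn⟩) : (Fin n ⊕ Fin n) ⊕ (Fin n ⊕ Fin n))
        (whisker2 L)).PosDef ∧
    Matrix.trace
        ((dropIdx (Sum.inl (Sum.inl ⟨0, hn⟩) : (Fin n ⊕ Fin n) ⊕ (Fin n ⊕ Fin n))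
          (whisker2 L))⁻¹)
      ≥ 4 * (n : ℝ) + Matrix.trace ((dropIdx (⟨0, hn⟩ : Fin n) L + 2)⁻¹) ∧
    Matrix.trace
        ((2 : ℝ)⁻¹ • (dropIdx
          (Sum.inl (Sum.inl ⟨0, hn⟩) : (Fin n ⊕ Fin n) ⊕ (Fin n ⊕ Fin n))
          (whisker2 L))⁻¹)
      ≥ (4 * (n : ℝ) + Matrix.trace ((dropIdx (⟨0, hn⟩ : Fin n) L + 2)⁻¹)) / 2 := by
  have hA := dropIdx_whisker2_posDef hground
  have htrace := hA.trace_inv_submatrix_inl_add_inr_le (whisker2GroundedEmb_injective ⟨0, hn⟩)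
  rw [submatrix_whisker2GroundedEmb_inl, submatrix_whisker2GroundedEmb_inr,
    trace_inv_fromBlocks_one_path, Fintype.card_fin] at htrace
  refine ⟨hA, by linarith, ?_⟩
  rw [trace_smul, smul_eq_mul]
  linarith

theorem whisker2_gramian_bound {n : ℕ} (hn : 0 < n)
    (L : Matrix (Fin n) (Fin n) ℝ)
    (hsym : L.IsSymm) (hpsd : L.PosSemidef)
    (hrow : ∀ i, ∑ j, L i j = 0)
    (hoff : ∀ i j, i ≠ j → L i j ≤ 0)
    (hground : (dropIdx (⟨0, hn⟩ : Fin n) L).PosDef) :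
    (dropIdx (Sum.inl (Sum.inl ⟨0, hn⟩) : (Fin n ⊕ Fin n) ⊕ (Fin n ⊕ Fin n))
        (whisker2 L)).PosDef ∧
    Matrix.trace
        ((dropIdx (Sum.inl (Sum.inl ⟨0, hn⟩) : (Fin n ⊕ Fin n) ⊕ (Fin n ⊕ Fin n))
          (whisker2 L))⁻¹)
      ≥ 4 * (n : ℝ) + Matrix.trace ((dropIdx (⟨0, hn⟩ : Fin n) L + 2)⁻¹) ∧
    Matrix.trace
        ((2 : ℝ)⁻¹ • (dropIdx
          (Sum.inl (Sum.inl ⟨0, hn⟩) : (Fin n ⊕ Fin n) ⊕ (Fin n ⊕ Fin n))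
          (whisker2 L))⁻¹)
      ≥ (4 * (n : ℝ) + Matrix.trace ((dropIdx (⟨0, hn⟩ : Fin n) L + 2)⁻¹)) / 2 :=
  whisker2_gramian_bound_general hn L hground
end

section
/- Let A ∈ ℝ^{n×n} be a symmetric M-matrix (positive definite with nonpositive off-diagonal entries). Then the set function K ↦ Tr(A[K]⁻¹) on subsets K ⊆ {1,…,n} is supermodular: for all subsets J, K ⊆ {1,…,n}, Tr(A[K]⁻¹) + Tr(A[J]⁻¹) ≤ Tr(A[K∪J]⁻¹) + Tr(A[K∩J]⁻¹). (Every principal submatrix A[K] with K nonempty is positive definite, hence invertible; Tr(A[∅]⁻¹) is taken to be 0.) -/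
/-!
Write `P_S` for `A[S]⁻¹` extended by zeros to an `n × n` matrix (`padInv`). For `i ∉ S`, the
vector `x = eᵢ - P_S A eᵢ` and the Schur complement `s = (A x)ᵢ = xᵀ A x > 0` of `A[S]` in
`A[S ∪ {i}]` give the rank-one update `P_{S ∪ {i}} = P_S + x xᵀ / s`, so adding `i` raises the
trace by `|x|² / s`. When the off-diagonal entries of `A` are nonpositive, induction along this
update shows that `P_S` is entrywise nonnegative and monotone in `S`. Hence, as `S` grows, `x ≥ 0`
grows entrywise and `s` decreases, so the marginal gains of `S ↦ Tr(A[S]⁻¹)` increase with `S`,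
which is supermodularity.
-/

open Matrix

/-- The principal submatrix `A[K]` of `A` with rows and columns indexed by the
subset `K`. -/
def principalSub {n : ℕ} (A : Matrix (Fin n) (Fin n) ℝ) (K : Finset (Fin n)) :
    Matrix {i : Fin n // i ∈ K} {i : Fin n // i ∈ K} ℝ :=
  A.submatrix Subtype.val Subtype.val

theorem Finset.add_le_union_add_inter_of_increments_mono {α β : Type*} [DecidableEq α]
    [AddCommGroup β] [PartialOrder β] [IsOrderedAddMonoid β] {f : Finset α → β}
    (hf : ∀ ⦃S T a⦄, S ⊆ T → a ∉ T → f (insert a S) - f S ≤ f (insert a T) - f T)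
    (J K : Finset α) : f K + f J ≤ f (K ∪ J) + f (K ∩ J) := by
  have hgain : ∀ U S T : Finset α, S ⊆ T → Disjoint U T → f (S ∪ U) - f S ≤ f (T ∪ U) - f T := by
    intro U
    induction U using Finset.induction_on with
    | empty => simp
    | insert a U haU ih =>
      intro S T hST hUT
      obtain ⟨haT, hUT⟩ := Finset.disjoint_insert_left.1 hUT
      have hSU : S ∪ U ⊆ T ∪ U := Finset.union_subset_union hST subset_rfl
      have haTU : a ∉ T ∪ U := by simp [haT, haU]
      calc f (S ∪ insert a U) - f S
          = (f (insert a (S ∪ U)) - f (S ∪ U)) + (f (S ∪ U) - f S) := by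
            rw [Finset.union_insert]; abel
        _ ≤ (f (insert a (T ∪ U)) - f (T ∪ U)) + (f (T ∪ U) - f T) :=
            add_le_add (hf hSU haTU) (ih S T hST hUT)
        _ = f (T ∪ insert a U) - f T := by rw [Finset.union_insert]; abel
  have h := hgain (J \ K) (J ∩ K) K Finset.inter_subset_right Finset.sdiff_disjoint
  rw [Finset.union_comm (J ∩ K), Finset.sdiff_union_inter, Finset.union_sdiff_self_eq_union,
    Finset.inter_comm] at h
  rwa [sub_le_sub_iff, add_comm (f J)] at h

section PadInv

variable {n : ℕ} (A : Matrix (Fin n) (Fin n) ℝ)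

noncomputable def padInv (K : Finset (Fin n)) : Matrix (Fin n) (Fin n) ℝ :=
  Matrix.of fun j k => if h : j ∈ K ∧ k ∈ K then (principalSub A K)⁻¹ ⟨j, h.1⟩ ⟨k, h.2⟩ else 0

variable {A} {K : Finset (Fin n)} {j k : Fin n}

theorem padInv_apply_of_mem (hj : j ∈ K) (hk : k ∈ K) :
    padInv A K j k = (principalSub A K)⁻¹ ⟨j, hj⟩ ⟨k, hk⟩ := by
  simp [padInv, hj, hk]

theorem padInv_apply_of_notMem (h : j ∉ K ∨ k ∉ K) : padInv A K j k = 0 := by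
  rcases h with h | h <;> simp [padInv, h]

variable (A K) in
theorem padInv_submatrix : (padInv A K).submatrix (↑) (↑) = (principalSub A K)⁻¹ := by
  ext j k; exact padInv_apply_of_mem j.2 k.2

variable (A) in
theorem padInv_empty : padInv A ∅ = 0 := by
  ext j k; exact padInv_apply_of_notMem (.inl (Finset.notMem_empty j))

variable (A K) in
theorem trace_padInv : (padInv A K).trace = ((principalSub A K)⁻¹).trace := by
  simp only [trace, diag]
  rw [← Finset.sum_subset (Finset.subset_univ K) fun j _ hj => padInv_apply_of_notMem (.inl hj),
    ← Finset.sum_coe_sort]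
  exact Finset.sum_congr rfl fun j _ => padInv_apply_of_mem j.2 j.2

theorem principalSub_mul_submatrix {P : Matrix (Fin n) (Fin n) ℝ}
    (hP : ∀ l ∉ K, ∀ k, P l k = 0) :
    principalSub A K * P.submatrix (↑) (↑) = (A * P).submatrix (↑) (↑) := by
  ext j k
  simp only [mul_apply, principalSub, submatrix_apply]
  rw [← Finset.sum_subset (Finset.subset_univ K) fun l _ hl => by rw [hP l hl, mul_zero]]
  exact Finset.sum_coe_sort K fun l => A j l * P l k

theorem eq_padInv_of_mul_eq {P : Matrix (Fin n) (Fin n) ℝ}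
    (hsupp : ∀ j k, j ∉ K ∨ k ∉ K → P j k = 0)
    (hmul : ∀ j ∈ K, ∀ k ∈ K, (A * P) j k = (1 : Matrix (Fin n) (Fin n) ℝ) j k) :
    P = padInv A K := by
  have hinv : (principalSub A K)⁻¹ = P.submatrix (↑) (↑) := by
    refine inv_eq_right_inv ?_
    rw [principalSub_mul_submatrix fun l hl k => hsupp l k (.inl hl)]
    ext j k
    rw [submatrix_apply, hmul j j.2 k k.2]
    simp only [one_apply, Subtype.ext_iff]
  ext j k
  by_cases h : j ∈ K ∧ k ∈ K
  · rw [padInv_apply_of_mem h.1 h.2, hinv, submatrix_apply]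
  · rw [hsupp j k (by tauto), padInv_apply_of_notMem (by tauto)]

theorem mul_padInv_apply_of_mem (hK : IsUnit (principalSub A K).det) (hj : j ∈ K) (k : Fin n) :
    (A * padInv A K) j k = (1 : Matrix (Fin n) (Fin n) ℝ) j k := by
  by_cases hk : k ∈ K
  · have h := congrFun₂ (principalSub_mul_submatrix (A := A) (P := padInv A K)
      fun l hl k => padInv_apply_of_notMem (.inl hl)) ⟨j, hj⟩ ⟨k, hk⟩
    rw [padInv_submatrix, mul_nonsing_inv _ hK, submatrix_apply] at h
    rw [← h]
    simp only [one_apply, Subtype.ext_iff]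
  · rw [one_apply_ne (by rintro rfl; exact hk hj), mul_apply]
    exact Finset.sum_eq_zero fun l _ => by rw [padInv_apply_of_notMem (.inr hk), mul_zero]

theorem padInv_isSymm (hA : A.IsSymm) : (padInv A K).IsSymm := by
  ext j k
  by_cases h : j ∈ K ∧ k ∈ K
  · rw [transpose_apply, padInv_apply_of_mem h.1 h.2, padInv_apply_of_mem h.2 h.1]
    exact ((hA.submatrix _).inv).apply _ _
  · rw [transpose_apply, padInv_apply_of_notMem (by tauto), padInv_apply_of_notMem (by tauto)]

variable (A) in
noncomputable def schurVec (S : Finset (Fin n)) (i : Fin n) : Fin n → ℝ :=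
  Pi.single i 1 - padInv A S *ᵥ A.col i

variable (A) in
noncomputable def schurCompl (S : Finset (Fin n)) (i : Fin n) : ℝ :=
  (A *ᵥ schurVec A S i) i

theorem isUnit_det_principalSub (hA : A.PosDef) (K : Finset (Fin n)) :
    IsUnit (principalSub A K).det :=
  (hA.submatrix Subtype.val_injective).det_pos.ne'.isUnit

variable {S : Finset (Fin n)} {i : Fin n}

theorem schurVec_self (hi : i ∉ S) : schurVec A S i i = 1 := by
  simp [schurVec, mulVec, dotProduct, padInv_apply_of_notMem (.inl hi)]

theorem schurVec_apply_of_notMem (hj : j ∉ insert i S) : schurVec A S i j = 0 := by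
  obtain ⟨hji, hjS⟩ : j ≠ i ∧ j ∉ S := by simpa using hj
  simp [schurVec, mulVec, dotProduct, padInv_apply_of_notMem (.inl hjS), hji]

theorem mulVec_schurVec_apply_of_mem (hS : IsUnit (principalSub A S).det) (hj : j ∈ S) :
    (A *ᵥ schurVec A S i) j = 0 := by
  have h : ((A * padInv A S) *ᵥ A.col i) j = A j i := by
    simp only [mulVec, dotProduct, mul_padInv_apply_of_mem hS hj, one_apply, ite_mul, one_mul,
      zero_mul, Finset.sum_ite_eq, Finset.mem_univ, if_true, col_apply]
  rw [schurVec, mulVec_sub, mulVec_mulVec, Pi.sub_apply, h, mulVec_single_one, col_apply,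
    sub_self]

theorem schurCompl_eq_dotProduct (hS : IsUnit (principalSub A S).det) (hi : i ∉ S) :
    schurCompl A S i = schurVec A S i ⬝ᵥ (A *ᵥ schurVec A S i) := by
  rw [dotProduct, Finset.sum_eq_single i, schurVec_self hi, one_mul, schurCompl]
  · intro j _ hji
    by_cases hj : j ∈ S
    · rw [mulVec_schurVec_apply_of_mem hS hj, mul_zero]
    · rw [schurVec_apply_of_notMem (by simp [hji, hj]), zero_mul]
  · simp

theorem schurCompl_pos (hA : A.PosDef) (hi : i ∉ S) : 0 < schurCompl A S i := by
  have hx : schurVec A S i ≠ 0 := fun h => by simpa [h] using schurVec_self (A := A) hi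
  rw [schurCompl_eq_dotProduct (isUnit_det_principalSub hA S) hi]
  simpa using hA.dotProduct_mulVec_pos hx

theorem padInv_insert (hsym : A.IsSymm) (hA : A.PosDef) (hi : i ∉ S) :
    padInv A (insert i S) =
      padInv A S + (schurCompl A S i)⁻¹ • vecMulVec (schurVec A S i) (schurVec A S i) := by
  have hs : schurCompl A S i ≠ 0 := (schurCompl_pos hA hi).ne'
  refine (eq_padInv_of_mul_eq (fun j k hjk => ?_) fun j hj k _ => ?_).symm
  · have hP : padInv A S j k = 0 :=
      padInv_apply_of_notMem (hjk.imp (mt Finset.mem_insert_of_mem) (mt Finset.mem_insert_of_mem))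
    have hx : schurVec A S i j * schurVec A S i k = 0 := by
      rcases hjk with h | h <;> simp [schurVec_apply_of_notMem h]
    simp [hP, vecMulVec_apply, hx]
  rw [mul_add, Matrix.mul_smul, mul_vecMulVec, Matrix.add_apply, Matrix.smul_apply,
    vecMulVec_apply, smul_eq_mul]
  rcases Finset.mem_insert.1 hj with rfl | hjS
  · have hAP : (A * padInv A S) j k = (padInv A S *ᵥ A.col j) k := by
      rw [← transpose_apply (A * padInv A S), transpose_mul, padInv_isSymm hsym, hsym.eq]
      rfl
    rw [← schurCompl, inv_mul_cancel_left₀ hs, hAP, schurVec, Pi.sub_apply, add_sub_cancel,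
      Pi.single_apply, one_apply]
    simp only [eq_comm]
  · rw [mulVec_schurVec_apply_of_mem (isUnit_det_principalSub hA S) hjS,
      mul_padInv_apply_of_mem (isUnit_det_principalSub hA S) hjS, zero_mul, mul_zero, add_zero]

theorem trace_padInv_insert (hsym : A.IsSymm) (hA : A.PosDef) (hi : i ∉ S) :
    (padInv A (insert i S)).trace =
      (padInv A S).trace + schurVec A S i ⬝ᵥ schurVec A S i / schurCompl A S i := by
  rw [padInv_insert hsym hA hi, trace_add, trace_smul, trace_vecMulVec, smul_eq_mul,
    inv_mul_eq_div]

section MMatrix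

variable (hoff : ∀ i j, i ≠ j → A i j ≤ 0)
include hoff

theorem schurVec_le_schurVec {T : Finset (Fin n)} (hP : ∀ j k, padInv A S j k ≤ padInv A T j k)
    (hiS : i ∉ S) (hiT : i ∉ T) (j : Fin n) : schurVec A S i j ≤ schurVec A T i j := by
  simp only [schurVec, Pi.sub_apply, mulVec, dotProduct, col_apply]
  refine sub_le_sub_left (Finset.sum_le_sum fun k _ => ?_) _
  by_cases hk : k = i
  · subst hk
    rw [padInv_apply_of_notMem (.inr hiS), padInv_apply_of_notMem (.inr hiT)]
  · exact mul_le_mul_of_nonpos_right (hP j k) (hoff k i hk)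

theorem schurVec_nonneg (hP : ∀ j k, 0 ≤ padInv A S j k) (hi : i ∉ S) (j : Fin n) :
    0 ≤ schurVec A S i j := by
  have h := schurVec_le_schurVec hoff (S := ∅) (by simpa [padInv_empty] using hP)
    (Finset.notMem_empty i) hi j
  rw [schurVec, padInv_empty, zero_mulVec, sub_zero] at h
  exact (Pi.single_nonneg.2 zero_le_one j).trans h

theorem schurCompl_le_schurCompl {T : Finset (Fin n)}
    (hx : ∀ j, schurVec A S i j ≤ schurVec A T i j) (hiS : i ∉ S) (hiT : i ∉ T) :
    schurCompl A T i ≤ schurCompl A S i := by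
  simp only [schurCompl, mulVec, dotProduct]
  refine Finset.sum_le_sum fun j _ => ?_
  by_cases hj : i = j
  · subst hj
    rw [schurVec_self hiS, schurVec_self hiT]
  · exact mul_le_mul_of_nonpos_left (hx j) (hoff i j hj)

variable (hsym : A.IsSymm) (hA : A.PosDef)
include hsym hA

theorem padInv_le_padInv_insert (hP : ∀ j k, 0 ≤ padInv A S j k) (hi : i ∉ S) (j k : Fin n) :
    padInv A S j k ≤ padInv A (insert i S) j k := by
  rw [padInv_insert hsym hA hi, Matrix.add_apply, le_add_iff_nonneg_right, Matrix.smul_apply,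
    vecMulVec_apply, smul_eq_mul]
  exact mul_nonneg (inv_nonneg.2 (schurCompl_pos hA hi).le)
    (mul_nonneg (schurVec_nonneg hoff hP hi j) (schurVec_nonneg hoff hP hi k))

theorem padInv_nonneg (K : Finset (Fin n)) (j k : Fin n) : 0 ≤ padInv A K j k := by
  induction K using Finset.induction_on generalizing j k with
  | empty => simp [padInv_empty]
  | insert i K hi ih => exact (ih j k).trans (padInv_le_padInv_insert hoff hsym hA ih hi j k)

theorem padInv_mono {T : Finset (Fin n)} (hST : S ⊆ T) (j k : Fin n) :
    padInv A S j k ≤ padInv A T j k := by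
  have hmono : Monotone (β := Fin n → Fin n → ℝ) (padInv A) :=
    Finset.monotone_iff_forall_le_insert.2 fun K _ hi =>
      padInv_le_padInv_insert hoff hsym hA (padInv_nonneg hoff hsym hA K) hi
  exact hmono hST j k

theorem trace_padInv_insert_sub_le {T : Finset (Fin n)} (hST : S ⊆ T) (hiT : i ∉ T) :
    (padInv A (insert i S)).trace - (padInv A S).trace ≤
      (padInv A (insert i T)).trace - (padInv A T).trace := by
  have hiS : i ∉ S := mt (@hST i) hiT
  have hx := schurVec_le_schurVec hoff (padInv_mono hoff hsym hA hST) hiS hiT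
  have hx0 := schurVec_nonneg hoff (padInv_nonneg hoff hsym hA S) hiS
  rw [trace_padInv_insert hsym hA hiS, trace_padInv_insert hsym hA hiT, add_sub_cancel_left,
    add_sub_cancel_left]
  exact div_le_div₀ (Finset.sum_nonneg fun j _ => mul_self_nonneg _)
    (Finset.sum_le_sum fun j _ => mul_self_le_mul_self (hx0 j) (hx j))
    (schurCompl_pos hA hiT) (schurCompl_le_schurCompl hoff hx hiS hiT)

end MMatrix

end PadInv

/-- For a symmetric M-matrix `A` (positive definite with nonpositive off-diagonal
entries), the set function `K ↦ Tr(A[K]⁻¹)` is supermodular. -/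
theorem trace_inv_principalSub_supermodular {n : ℕ}
    (A : Matrix (Fin n) (Fin n) ℝ)
    (hsym : A.IsSymm) (hpd : A.PosDef)
    (hoff : ∀ i j, i ≠ j → A i j ≤ 0)
    (J K : Finset (Fin n)) :
    Matrix.trace ((principalSub A K)⁻¹) + Matrix.trace ((principalSub A J)⁻¹)
      ≤ Matrix.trace ((principalSub A (K ∪ J))⁻¹)
        + Matrix.trace ((principalSub A (K ∩ J))⁻¹) := by
  simp only [← trace_padInv]
  exact Finset.add_le_union_add_inter_of_increments_mono (f := fun K => (padInv A K).trace)
    (fun _ _ _ hST hiT => trace_padInv_insert_sub_le hoff hsym hpd hST hiT) J K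
end

section
/- Let A ∈ ℝ^{n×n} be a symmetric M-matrix (positive definite with nonpositive off-diagonal entries), and let J, K ⊆ {1,…,n} be disjoint nonempty subsets. Then Tr(A[J∪K]⁻¹) ≥ Tr(A[J]⁻¹) + Tr(A[K]⁻¹); that is, the trace of the inverse of a principal submatrix of a symmetric M-matrix is superadditive over disjoint index sets. -/
/-!
Reindex `A[J ∪ K]` as a positive-definite block matrix `M = [[P, Q], [Qᴴ, R]]` with
`P = A[J]` and `R = A[K]`. By the Schur-complement inversion formula the upper-left block of
`M⁻¹` is `P⁻¹ + P⁻¹ Q S⁻¹ Qᴴ P⁻¹`, where `S = R - Qᴴ P⁻¹ Q` is positive semidefinite, so that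
block dominates `P⁻¹` in the Loewner order; swapping the blocks gives the same for `R`. Taking
traces, `tr M⁻¹ ≥ tr P⁻¹ + tr R⁻¹`.
-/

open Matrix

namespace Matrix

section trace

variable {m n α : Type*} [Fintype m] [Fintype n] [AddCommMonoid α]

theorem trace_submatrix_equiv_s17 (M : Matrix m m α) (e : n ≃ m) :
    (M.submatrix e e).trace = M.trace :=
  Fintype.sum_equiv e _ _ fun _ => rfl

theorem trace_toBlocks₁₁_add_trace_toBlocks₂₂ (M : Matrix (m ⊕ n) (m ⊕ n) α) :
    M.toBlocks₁₁.trace + M.toBlocks₂₂.trace = M.trace := by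
  simp [trace, Fintype.sum_sum_type, toBlocks₁₁, toBlocks₂₂]

end trace

namespace PosDef

variable {m n K : Type*} [Fintype m] [Fintype n] [DecidableEq m] [DecidableEq n]
  [Field K] [PartialOrder K] [StarRing K] [StarOrderedRing K]
  {M : Matrix (m ⊕ n) (m ⊕ n) K}

theorem posSemidef_toBlocks₁₁_inv_sub_inv_toBlocks₁₁ (hM : M.PosDef) :
    (M⁻¹.toBlocks₁₁ - M.toBlocks₁₁⁻¹).PosSemidef := by
  set P := M.toBlocks₁₁
  set Q := M.toBlocks₁₂
  set R := M.toBlocks₂₂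
  have hM_eq : M = fromBlocks P Q Qᴴ R := by
    have hherm := hM.isHermitian
    rw [← fromBlocks_toBlocks M, isHermitian_fromBlocks_iff] at hherm
    rw [hherm.2.1]
    exact (fromBlocks_toBlocks M).symm
  have hP : P.PosDef := hM.submatrix Sum.inl_injective
  let := hP.isUnit.invertible
  rw [hM_eq] at hM ⊢
  let := hM.isUnit.invertible
  let := invertibleOfFromBlocks₁₁Invertible P Q Qᴴ R
  have hS : (R - Qᴴ * P⁻¹ * Q).PosSemidef := (PosDef.fromBlocks₁₁ Q R hP).mp hM.posSemidef
  rw [← invOf_eq_nonsing_inv (fromBlocks P Q Qᴴ R), invOf_fromBlocks₁₁_eq, toBlocks_fromBlocks₁₁]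
  simp only [invOf_eq_nonsing_inv, add_sub_cancel_left]
  have := hS.inv.conjTranspose_mul_mul_same (Qᴴ * P⁻¹)
  rwa [conjTranspose_mul, hP.isHermitian.inv, conjTranspose_conjTranspose,
    ← Matrix.mul_assoc] at this

theorem trace_inv_toBlocks₁₁_le (hM : M.PosDef) :
    M.toBlocks₁₁⁻¹.trace ≤ M⁻¹.toBlocks₁₁.trace := by
  rw [← sub_nonneg, ← trace_sub]
  exact hM.posSemidef_toBlocks₁₁_inv_sub_inv_toBlocks₁₁.trace_nonneg

theorem trace_inv_toBlocks₂₂_le (hM : M.PosDef) :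
    M.toBlocks₂₂⁻¹.trace ≤ M⁻¹.toBlocks₂₂.trace := by
  have := (hM.submatrix (Equiv.sumComm n m).injective).trace_inv_toBlocks₁₁_le
  rwa [inv_submatrix_equiv] at this

theorem trace_inv_toBlocks₁₁_add_trace_inv_toBlocks₂₂_le (hM : M.PosDef) :
    M.toBlocks₁₁⁻¹.trace + M.toBlocks₂₂⁻¹.trace ≤ M⁻¹.trace := by
  rw [← trace_toBlocks₁₁_add_trace_toBlocks₂₂ M⁻¹]
  exact add_le_add hM.trace_inv_toBlocks₁₁_le hM.trace_inv_toBlocks₂₂_le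

end PosDef

end Matrix

theorem trace_inv_principalSub_superadditive_general {n : ℕ}
    (A : Matrix (Fin n) (Fin n) ℝ)
    (hpd : A.PosDef)
    (J K : Finset (Fin n)) (hdisj : Disjoint J K) :
    Matrix.trace ((principalSub A (J ∪ K))⁻¹)
      ≥ Matrix.trace ((principalSub A J)⁻¹) + Matrix.trace ((principalSub A K)⁻¹) := by
  let e := Equiv.Finset.union J K hdisj
  have hM : ((principalSub A (J ∪ K)).submatrix e e).PosDef :=
    hpd.submatrix (Subtype.val_injective.comp e.injective)
  have := hM.trace_inv_toBlocks₁₁_add_trace_inv_toBlocks₂₂_le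
  rwa [inv_submatrix_equiv, trace_submatrix_equiv_s17] at this

/-- For a symmetric M-matrix `A` (positive definite with nonpositive off-diagonal
entries), the trace of the inverse of a principal submatrix is superadditive over
disjoint index sets. -/
theorem trace_inv_principalSub_superadditive {n : ℕ}
    (A : Matrix (Fin n) (Fin n) ℝ)
    (hsym : A.IsSymm) (hpd : A.PosDef)
    (hoff : ∀ i j, i ≠ j → A i j ≤ 0)
    (J K : Finset (Fin n)) (hdisj : Disjoint J K)
    (hJ : J.Nonempty) (hK : K.Nonempty) :
    Matrix.trace ((principalSub A (J ∪ K))⁻¹)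
      ≥ Matrix.trace ((principalSub A J)⁻¹) + Matrix.trace ((principalSub A K)⁻¹) :=
  trace_inv_principalSub_superadditive_general A hpd J K hdisj
end
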